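/- Let v_0, ..., v_k be points in ℝ^n and let w be a point in the interior of the convex hull of {v_0, ..., v_k}. Then the integral ∫_{ℝ^n} e^{⟨w, y⟩}/(∑_{i=0}^k e^{⟨v_i, y⟩}) dy is finite. -/

import Mathlib

/-!
If the closed ball of radius `r > 0` about `w` lies in the convex hull of the `vᵢ`, then for every
`y` the point `w + r • y / ‖y‖` lies in the hull, and the linear functional `⟪·, y⟫` attains its
maximum over a convex hull at one of the generators. Hence `∑ᵢ exp ⟪vᵢ, y⟫ ≥ exp (⟪w, y⟫ + r ‖y‖)`,
so the integrand is at most `exp (-r ‖y‖)`, which is integrable in finite dimension because it is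
dominated by a multiple of `(1 + ‖y‖) ^ (-(dim + 1))`.
-/

open MeasureTheory Real Metric Set
open scoped RealInnerProductSpace Nat

theorem one_add_pow_le_mul_exp {c t : ℝ} (hc : 0 < c) (ht : 0 ≤ t) (m : ℕ) :
    (1 + t) ^ m ≤ m ! * exp c / c ^ m * exp (c * t) := by
  have h := pow_div_factorial_le_exp (c * (1 + t)) (by positivity) m
  rw [mul_pow, mul_one_add, exp_add, div_le_iff₀ (by positivity)] at h
  rw [div_mul_eq_mul_div, le_div_iff₀ (by positivity)]
  linarith

theorem integrable_exp_neg_mul_norm {E : Type*} [NormedAddCommGroup E] [NormedSpace ℝ E]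
    [FiniteDimensional ℝ E] [MeasurableSpace E] [BorelSpace E] {μ : Measure E}
    [μ.IsAddHaarMeasure] {c : ℝ} (hc : 0 < c) :
    Integrable (fun x : E ↦ exp (-(c * ‖x‖))) μ := by
  set m := Module.finrank ℝ E + 1
  have hm : (Module.finrank ℝ E : ℝ) < m := by simp [m]
  refine ((integrable_one_add_norm (μ := μ) hm).const_mul (m ! * exp c / c ^ m)).mono'
    (by fun_prop) (.of_forall fun x ↦ ?_)
  have hx : 0 < 1 + ‖x‖ := by positivity
  rw [norm_of_nonneg (exp_pos _).le, rpow_neg hx.le, rpow_natCast, exp_neg,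
    ← div_eq_mul_inv, inv_le_comm₀ (exp_pos _) (by positivity), inv_div,
    div_le_iff₀' (by positivity)]
  exact one_add_pow_le_mul_exp hc (norm_nonneg x) m

section InnerProductSpace

variable {F ι : Type*} [NormedAddCommGroup F] [InnerProductSpace ℝ F] [Fintype ι]

theorem exists_inner_le_of_mem_convexHull {s : Set F} {p : F} (hp : p ∈ convexHull ℝ s)
    (y : F) : ∃ q ∈ s, ⟪p, y⟫ ≤ ⟪q, y⟫ :=
  (((innerₛₗ ℝ).flip y).convexOn convex_univ).exists_ge_of_mem_convexHull (subset_univ s) hp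

theorem exists_mem_closedBall_inner_eq (w y : F) {r : ℝ} (hr : 0 ≤ r) :
    ∃ p ∈ closedBall w r, ⟪p, y⟫ = ⟪w, y⟫ + r * ‖y‖ := by
  rcases eq_or_ne y 0 with rfl | hy
  · exact ⟨w, mem_closedBall_self hr, by simp⟩
  have hy' : ‖y‖ ≠ 0 := norm_ne_zero_iff.mpr hy
  refine ⟨w + (r / ‖y‖) • y, ?_, ?_⟩
  · rw [mem_closedBall, dist_eq_norm, add_sub_cancel_left, norm_smul, norm_div, norm_norm,
      norm_of_nonneg hr, div_mul_cancel₀ r hy']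
  · rw [inner_add_left, real_inner_smul_left, real_inner_self_eq_norm_sq]
    field_simp

theorem exp_inner_add_mul_norm_le_sum_exp_inner {v : ι → F} {w : F}
    {r : ℝ} (hr : 0 ≤ r) (hball : closedBall w r ⊆ convexHull ℝ (range v)) (y : F) :
    exp (⟪w, y⟫ + r * ‖y‖) ≤ ∑ i, exp ⟪v i, y⟫ := by
  obtain ⟨p, hpw, hp⟩ := exists_mem_closedBall_inner_eq w y hr
  obtain ⟨_, ⟨i, rfl⟩, hpi⟩ := exists_inner_le_of_mem_convexHull (hball hpw) y
  calc exp (⟪w, y⟫ + r * ‖y‖) ≤ exp ⟪v i, y⟫ := exp_le_exp.mpr (hp ▸ hpi)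
    _ ≤ ∑ j, exp ⟪v j, y⟫ :=
      Finset.single_le_sum (f := fun j ↦ exp ⟪v j, y⟫) (fun j _ ↦ (exp_pos _).le)
        (Finset.mem_univ i)

theorem exp_inner_div_sum_exp_inner_le {v : ι → F} {w : F}
    {r : ℝ} (hr : 0 ≤ r) (hball : closedBall w r ⊆ convexHull ℝ (range v)) (y : F) :
    exp ⟪w, y⟫ / ∑ i, exp ⟪v i, y⟫ ≤ exp (-(r * ‖y‖)) := by
  have hsum := exp_inner_add_mul_norm_le_sum_exp_inner hr hball y
  rw [div_le_iff₀ ((exp_pos _).trans_le hsum)]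
  calc exp ⟪w, y⟫ = exp (-(r * ‖y‖)) * exp (⟪w, y⟫ + r * ‖y‖) := by rw [← exp_add]; ring_nf
    _ ≤ exp (-(r * ‖y‖)) * ∑ i, exp ⟪v i, y⟫ := by gcongr

theorem integrable_exp_inner_div_sum_exp_inner [FiniteDimensional ℝ F] [MeasurableSpace F]
    [BorelSpace F] {μ : Measure F} [μ.IsAddHaarMeasure] {v : ι → F}
    {w : F} (hw : w ∈ interior (convexHull ℝ (range v))) :
    Integrable (fun y ↦ exp ⟪w, y⟫ / ∑ i, exp ⟪v i, y⟫) μ := by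
  obtain ⟨r, hr, hball⟩ := nhds_basis_closedBall.mem_iff.mp (mem_interior_iff_mem_nhds.mp hw)
  refine (integrable_exp_neg_mul_norm hr).mono' (Measurable.aestronglyMeasurable (by fun_prop))
    (.of_forall fun y ↦ ?_)
  rw [norm_of_nonneg (by positivity)]
  exact exp_inner_div_sum_exp_inner_le hr.le hball y

end InnerProductSpace

theorem stmt_1 {n k : ℕ} (v : Fin (k + 1) → EuclideanSpace ℝ (Fin n))
    (w : EuclideanSpace ℝ (Fin n))
    (hw : w ∈ interior (convexHull ℝ (Set.range v))) :
    Integrable (fun y : EuclideanSpace ℝ (Fin n) =>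
      Real.exp (inner ℝ w y : ℝ) / ∑ i, Real.exp (inner ℝ (v i) y : ℝ)) :=
  integrable_exp_inner_div_sum_exp_inner hw
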